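/- Let p, q ≥ 2 with n = p+q ≥ 5, and let W be the Weyl tensor at a point of the Riemannian product S^p × S^q of round unit spheres, expressed in normal coordinates at that point (coordinates split as (X,Y) ∈ ℝ^p × ℝ^q). If V ∈ C^1(ℝ^n) ∩ D^{1,2}(ℝ^n) is O(p)×O(q)-invariant, i.e. V(X,Y) = v(|X|,|Y|) for some v, and satisfies the decay |∇V(x)| ≤ C(1+|x|)^{1-n}, then ∑ W_{iαjβ} ∫_{ℝ^n} x^α x^β ∂_i V ∂_j V dx = -C₃ ∫_{ℝ^n} (|X| ∂₂v - |Y| ∂₁v)² dX dY ≤ 0, where C₃ = 2(p-1)(q-1)/((n-1)(n-2)) and ∂₁v, ∂₂v denote partial derivatives of v in its two radial variables. -/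

import Mathlib

open MeasureTheory Real Filter Metric

noncomputable section

/-- `ℝ^n` as a Euclidean space. -/
abbrev E (n : ℕ) := EuclideanSpace ℝ (Fin n)

/-- The `i`-th standard basis vector of `ℝ^n`. -/
def eb {n : ℕ} (i : Fin n) : E n := EuclideanSpace.single i 1

/-- The geometer's Euclidean Laplacian `Δ = -∑ ∂_i^2`. -/
def lap {n : ℕ} (V : E n → ℝ) (x : E n) : ℝ :=
  -∑ i : Fin n, fderiv ℝ (fun y => fderiv ℝ V y (eb i)) x (eb i)

/-- Membership in `D^{1,2}(ℝ^n)`: `V` is a limit of compactly supported smooth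
functions in the gradient `L²` (semi-)norm. -/
def MemD12 {n : ℕ} (V : E n → ℝ) : Prop :=
  ∃ u : ℕ → E n → ℝ,
    (∀ k, ContDiff ℝ (⊤ : ℕ∞) (u k) ∧ HasCompactSupport (u k)) ∧
    Tendsto (fun k => ∫ x : E n, ‖fderiv ℝ V x - fderiv ℝ (u k) x‖ ^ 2) atTop (nhds 0)

/-- `Σ`: nonzero finite-energy solutions of `ΔV = |V|^{2*-2} V` on `ℝ^n`. -/
def InSigma (n : ℕ) (V : E n → ℝ) : Prop :=
  MemD12 V ∧ V ≠ 0 ∧ ∀ x, lap V x = |V x| ^ ((4 : ℝ) / ((n : ℝ) - 2)) * V x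

/-- The Kelvin transform `V*(x) = |x|^{2-n} V(x/|x|²)`. -/
def kelvin (n : ℕ) (V : E n → ℝ) (x : E n) : ℝ :=
  ‖x‖ ^ ((2 : ℝ) - (n : ℝ)) * V ((‖x‖ ^ 2)⁻¹ • x)

/-- Norm of the first `p` coordinates (the `S^p` block) of `x ∈ ℝ^{p+q}`. -/
def normX (p q : ℕ) (x : E (p + q)) : ℝ :=
  Real.sqrt (∑ i : Fin p, (x (Fin.castAdd q i)) ^ 2)

/-- Norm of the last `q` coordinates (the `S^q` block) of `x ∈ ℝ^{p+q}`. -/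
def normY (p q : ℕ) (x : E (p + q)) : ℝ :=
  Real.sqrt (∑ j : Fin q, (x (Fin.natAdd p j)) ^ 2)

def C1c (p q : ℕ) : ℝ := 2 * q * ((q : ℝ) - 1) / (((p + q : ℕ) - 1 : ℝ) * ((p + q : ℕ) - 2 : ℝ))
def C2c (p q : ℕ) : ℝ := 2 * p * ((p : ℝ) - 1) / (((p + q : ℕ) - 1 : ℝ) * ((p + q : ℕ) - 2 : ℝ))
def C3c (p q : ℕ) : ℝ :=
  2 * ((p : ℝ) - 1) * ((q : ℝ) - 1) / (((p + q : ℕ) - 1 : ℝ) * ((p + q : ℕ) - 2 : ℝ))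

/-- Kronecker delta on `Fin (p+q)`. -/
def kdelta {n : ℕ} (a b : Fin n) : ℝ := if a = b then 1 else 0

/-- The Weyl tensor of `S^p × S^q` (round unit spheres) at a point, in split normal
coordinates: `W_{ijkl} = C₁(δ_{ik}δ_{jl} - δ_{il}δ_{jk})` on the `S^p` block,
`W_{αβγδ} = C₂(δ_{αγ}δ_{βδ} - δ_{αδ}δ_{βγ})` on the `S^q` block,
`W_{iαjβ} = -C₃ δ_{ij} δ_{αβ}` for the mixed components, and zero otherwise
(up to the Weyl symmetries). -/
def Wprod (p q : ℕ) (a b c d : Fin (p + q)) : ℝ :=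
  if (a : ℕ) < p ∧ (b : ℕ) < p ∧ (c : ℕ) < p ∧ (d : ℕ) < p then
    C1c p q * (kdelta a c * kdelta b d - kdelta a d * kdelta b c)
  else if p ≤ (a : ℕ) ∧ p ≤ (b : ℕ) ∧ p ≤ (c : ℕ) ∧ p ≤ (d : ℕ) then
    C2c p q * (kdelta a c * kdelta b d - kdelta a d * kdelta b c)
  else if (a : ℕ) < p ∧ p ≤ (b : ℕ) ∧ (c : ℕ) < p ∧ p ≤ (d : ℕ) then
    -C3c p q * kdelta a c * kdelta b d
  else if p ≤ (a : ℕ) ∧ (b : ℕ) < p ∧ p ≤ (c : ℕ) ∧ (d : ℕ) < p then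
    -C3c p q * kdelta a c * kdelta b d
  else if (a : ℕ) < p ∧ p ≤ (b : ℕ) ∧ p ≤ (c : ℕ) ∧ (d : ℕ) < p then
    C3c p q * kdelta a d * kdelta b c
  else if p ≤ (a : ℕ) ∧ (b : ℕ) < p ∧ (c : ℕ) < p ∧ p ≤ (d : ℕ) then
    C3c p q * kdelta a d * kdelta b c
  else 0

lemma natAdd_inj {p q : ℕ} {i j : Fin q} : Fin.natAdd p i = Fin.natAdd p j ↔ i = j := by
  constructor
  · intro h; ext; have := congrArg (fun a : Fin (p+q) => (a:ℕ)) h; simpa using this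
  · rintro rfl; rfl

lemma kdelta_cc {p q : ℕ} (i j : Fin p) :
    kdelta (Fin.castAdd q i) (Fin.castAdd q j) = if i = j then (1:ℝ) else 0 := by
  simp [kdelta, Fin.castAdd_inj]

lemma kdelta_nn {p q : ℕ} (i j : Fin q) :
    kdelta (Fin.natAdd p i) (Fin.natAdd p j) = if i = j then (1:ℝ) else 0 := by
  simp [kdelta, natAdd_inj]

lemma castAdd_ne_natAdd {p q : ℕ} (i : Fin p) (j : Fin q) :
    Fin.castAdd q i ≠ Fin.natAdd p j := by
  intro h
  have := congrArg (fun a : Fin (p+q) => (a : ℕ)) h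
  simp at this
  omega

lemma kdelta_cn {p q : ℕ} (i : Fin p) (j : Fin q) :
    kdelta (Fin.castAdd q i) (Fin.natAdd p j) = 0 := by
  simp [kdelta, castAdd_ne_natAdd]

lemma kdelta_nc {p q : ℕ} (j : Fin q) (i : Fin p) :
    kdelta (Fin.natAdd p j) (Fin.castAdd q i) = 0 := by
  simp [kdelta, (castAdd_ne_natAdd i j).symm]

lemma sum_ite_of_ite {ι : Type*} [Fintype ι] [DecidableEq ι] (P : Prop) [Decidable P]
    (b : ι) (f : ι → ℝ) :
    ∑ x : ι, (if P then (if b = x then f x else 0) else 0) = if P then f b else 0 := by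
  split_ifs with h <;> simp

lemma sum_ite_of_ite' {ι : Type*} [Fintype ι] [DecidableEq ι] (P : Prop) [Decidable P]
    (b : ι) (f : ι → ℝ) :
    ∑ x : ι, (if P then (if x = b then f x else 0) else 0) = if P then f b else 0 := by
  split_ifs with h <;> simp

lemma dfactor {a b : ℕ} (h : Fin a → Fin b → ℝ) (F : Fin a → ℝ) (G : Fin b → ℝ)
    (hw : ∀ i j, h i j = F i * G j) :
    ∑ i, ∑ j, h i j = (∑ i, F i) * (∑ j, G j) := by
  simp only [hw]
  exact (Finset.sum_mul_sum _ _ _ _).symm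

lemma contraction (p q : ℕ) (x D : Fin (p+q) → ℝ) (f g : ℝ)
    (hDX : ∀ i : Fin p, D (Fin.castAdd q i) = f * x (Fin.castAdd q i))
    (hDY : ∀ j : Fin q, D (Fin.natAdd p j) = g * x (Fin.natAdd p j)) :
    ∑ a, ∑ b, ∑ c, ∑ d, Wprod p q a b c d * (x b * x d * D a * D c)
      = -C3c p q * ((∑ i : Fin p, x (Fin.castAdd q i)^2) *
          (∑ j : Fin q, x (Fin.natAdd p j)^2) * (f - g)^2) := by
  simp only [Fin.sum_univ_add]
  have h1 : ∀ i : Fin p, ((p ≤ (i:ℕ)) = False) := fun i => eq_false (Nat.not_le.2 i.isLt)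
  have h2 : ∀ j : Fin q, ((p + (j:ℕ) < p) = False) := fun j => eq_false (by omega)
  have h3 : ∀ i : Fin p, (((i:ℕ) < p) = True) := fun i => eq_true i.isLt
  have h4 : ∀ j : Fin q, ((p ≤ p + (j:ℕ)) = True) := fun j => eq_true (Nat.le_add_right p j)
  simp only [Wprod, Fin.coe_castAdd, Fin.coe_natAdd, h1, h2, h3, h4,
    true_and, and_true, false_and, and_false, if_true, if_false]
  simp only [kdelta_cc, kdelta_nn, hDX, hDY, zero_mul, Finset.sum_const_zero, add_zero,
    zero_add, mul_ite, ite_mul, mul_zero, mul_one, mul_sub, sub_mul,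
    Finset.sum_ite_eq, Finset.sum_ite_eq', Finset.mem_univ, if_true, Finset.sum_sub_distrib]
  simp only [sum_ite_of_ite, sum_ite_of_ite', Finset.sum_ite_eq, Finset.sum_ite_eq',
    Finset.mem_univ, if_true]
  simp only [Finset.sum_add_distrib, Finset.sum_sub_distrib]
  have e1 := dfactor (fun x_1 x_2 : Fin p => C1c p q *
      (x (Fin.castAdd q x_2) * x (Fin.castAdd q x_2) * (f * x (Fin.castAdd q x_1)) *
        (f * x (Fin.castAdd q x_1))))
    (fun x_1 => x (Fin.castAdd q x_1) ^ 2)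
    (fun x_2 => C1c p q * (f * f) * x (Fin.castAdd q x_2) ^ 2) (fun i j => by ring)
  have e2 := dfactor (fun x_1 x_2 : Fin p => C1c p q *
      (x (Fin.castAdd q x_2) * x (Fin.castAdd q x_1) * (f * x (Fin.castAdd q x_1)) *
        (f * x (Fin.castAdd q x_2))))
    (fun x_1 => x (Fin.castAdd q x_1) ^ 2)
    (fun x_2 => C1c p q * (f * f) * x (Fin.castAdd q x_2) ^ 2) (fun i j => by ring)
  have e3 := dfactor (fun (x_1 : Fin p) (x_2 : Fin q) => -C3c p q *
      (x (Fin.natAdd p x_2) * x (Fin.natAdd p x_2) * (f * x (Fin.castAdd q x_1)) *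
        (f * x (Fin.castAdd q x_1))))
    (fun x_1 => x (Fin.castAdd q x_1) ^ 2)
    (fun x_2 => -C3c p q * (f * f) * x (Fin.natAdd p x_2) ^ 2) (fun i j => by ring)
  have e4 := dfactor (fun (x_1 : Fin p) (x_2 : Fin q) => C3c p q *
      (x (Fin.natAdd p x_2) * x (Fin.castAdd q x_1) * (f * x (Fin.castAdd q x_1)) *
        (g * x (Fin.natAdd p x_2))))
    (fun x_1 => x (Fin.castAdd q x_1) ^ 2)
    (fun x_2 => C3c p q * (f * g) * x (Fin.natAdd p x_2) ^ 2) (fun i j => by ring)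
  have e5 := dfactor (fun (x_1 : Fin q) (x_2 : Fin p) => C3c p q *
      (x (Fin.castAdd q x_2) * x (Fin.natAdd p x_1) * (g * x (Fin.natAdd p x_1)) *
        (f * x (Fin.castAdd q x_2))))
    (fun x_1 => x (Fin.natAdd p x_1) ^ 2)
    (fun x_2 => C3c p q * (f * g) * x (Fin.castAdd q x_2) ^ 2) (fun i j => by ring)
  have e6 := dfactor (fun (x_1 : Fin q) (x_2 : Fin p) => -C3c p q *
      (x (Fin.castAdd q x_2) * x (Fin.castAdd q x_2) * (g * x (Fin.natAdd p x_1)) *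
        (g * x (Fin.natAdd p x_1))))
    (fun x_1 => x (Fin.natAdd p x_1) ^ 2)
    (fun x_2 => -C3c p q * (g * g) * x (Fin.castAdd q x_2) ^ 2) (fun i j => by ring)
  have e7 := dfactor (fun (x_1 : Fin q) (x_2 : Fin q) => C2c p q *
      (x (Fin.natAdd p x_2) * x (Fin.natAdd p x_2) * (g * x (Fin.natAdd p x_1)) *
        (g * x (Fin.natAdd p x_1))))
    (fun x_1 => x (Fin.natAdd p x_1) ^ 2)
    (fun x_2 => C2c p q * (g * g) * x (Fin.natAdd p x_2) ^ 2) (fun i j => by ring)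
  have e8 := dfactor (fun (x_1 : Fin q) (x_2 : Fin q) => C2c p q *
      (x (Fin.natAdd p x_2) * x (Fin.natAdd p x_1) * (g * x (Fin.natAdd p x_1)) *
        (g * x (Fin.natAdd p x_2))))
    (fun x_1 => x (Fin.natAdd p x_1) ^ 2)
    (fun x_2 => C2c p q * (g * g) * x (Fin.natAdd p x_2) ^ 2) (fun i j => by ring)
  simp only [e1, e2, e3, e4, e5, e6, e7, e8]
  simp only [← Finset.mul_sum]
  ring


lemma deriv_cast {p q : ℕ} {V : E (p + q) → ℝ} (hV : ContDiff ℝ 1 V)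
    {v v₁ : ℝ → ℝ → ℝ}
    (hinv : ∀ x : E (p + q), V x = v (normX p q x) (normY p q x))
    (hv₁ : ∀ r₁ r₂ : ℝ, 0 < r₁ → 0 < r₂ → HasDerivAt (fun s => v s r₂) (v₁ r₁ r₂) r₁)
    (x : E (p + q)) (hX : normX p q x ≠ 0) (hY : normY p q x ≠ 0) (i : Fin p) :
    fderiv ℝ V x (eb (Fin.castAdd q i))
      = v₁ (normX p q x) (normY p q x) * x (Fin.castAdd q i) / normX p q x := by
  set a := Fin.castAdd q i with ha
  set SX := ∑ i' : Fin p, (x (Fin.castAdd q i')) ^ 2 with hSX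
  have hSXnn : 0 ≤ SX := Finset.sum_nonneg fun _ _ => sq_nonneg _
  have hrX : 0 < normX p q x :=
    lt_of_le_of_ne (Real.sqrt_nonneg _) (Ne.symm hX)
  have hrY : 0 < normY p q x :=
    lt_of_le_of_ne (Real.sqrt_nonneg _) (Ne.symm hY)
  have hSXpos : 0 < SX := by
    by_contra h
    push_neg at h
    have : SX = 0 := le_antisymm h hSXnn
    exact hX (by rw [normX, ← hSX, this, Real.sqrt_zero])
  -- coordinates
  have coordX : ∀ (t : ℝ) (i' : Fin p),
      (x + t • eb a) (Fin.castAdd q i') = x (Fin.castAdd q i') + t * (if i' = i then 1 else 0) := by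
    intro t i'
    simp [eb, ha, EuclideanSpace.single_apply, Fin.castAdd_inj]
  have coordY : ∀ (t : ℝ) (j : Fin q),
      (x + t • eb a) (Fin.natAdd p j) = x (Fin.natAdd p j) := by
    intro t j
    simp [eb, ha, EuclideanSpace.single_apply, (castAdd_ne_natAdd i j).symm]
  have hnormY : ∀ t : ℝ, normY p q (x + t • eb a) = normY p q x := by
    intro t
    unfold normY
    congr 1
    exact Finset.sum_congr rfl fun j _ => by rw [coordY]
  have hnormX : ∀ t : ℝ, normX p q (x + t • eb a)
      = Real.sqrt (SX + (2 * x a * t + t ^ 2)) := by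
    intro t
    unfold normX
    congr 1
    have : ∀ i' : Fin p, (x (Fin.castAdd q i') + t * (if i' = i then 1 else 0)) ^ 2
        = x (Fin.castAdd q i') ^ 2 + (if i' = i then 2 * x (Fin.castAdd q i') * t + t ^ 2 else 0) := by
      intro i'
      split_ifs with h <;> ring
    calc ∑ i' : Fin p, ((x + t • eb a) (Fin.castAdd q i')) ^ 2
        = ∑ i' : Fin p, (x (Fin.castAdd q i') ^ 2
            + (if i' = i then 2 * x (Fin.castAdd q i') * t + t ^ 2 else 0)) := by
          refine Finset.sum_congr rfl fun i' _ => ?_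
          rw [coordX, this]
      _ = SX + (2 * x a * t + t ^ 2) := by
          rw [Finset.sum_add_distrib, Finset.sum_ite_eq' Finset.univ i
            (fun i' => 2 * x (Fin.castAdd q i') * t + t ^ 2)]
          simp [ha]
          exact hSX.symm
  -- derivative 1 : via fderiv
  have hφ : HasDerivAt (fun t : ℝ => x + t • eb a) (eb a) 0 := by
    simpa using ((hasDerivAt_id (0:ℝ)).smul_const (eb a)).const_add x
  have hd' : HasFDerivAt V (fderiv ℝ V x) ((fun t : ℝ => x + t • eb a) 0) := by
    simpa using (hV.differentiable one_ne_zero x).hasFDerivAt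
  have h1 : HasDerivAt (fun t : ℝ => V (x + t • eb a)) (fderiv ℝ V x (eb a)) 0 :=
    hd'.comp_hasDerivAt 0 hφ
  -- derivative 2 : via chain rule through v
  have hpoly : HasDerivAt (fun t : ℝ => SX + (2 * x a * t + t ^ 2)) (2 * x a) 0 := by
    have h₁ : HasDerivAt (fun t : ℝ => t) 1 0 := hasDerivAt_id 0
    have h₂ := (h₁.const_mul (2 * x a)).add (hasDerivAt_pow 2 0)
    have h₃ := h₂.const_add SX
    simpa using h₃
  have hne : SX + (2 * x a * 0 + 0 ^ 2) ≠ 0 := by simpa using ne_of_gt hSXpos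
  have hsqrt0 : HasDerivAt (fun t : ℝ => Real.sqrt (SX + (2 * x a * t + t ^ 2)))
      (1 / (2 * Real.sqrt SX) * (2 * x a)) 0 := by
    have := (Real.hasDerivAt_sqrt (by simpa using ne_of_gt hSXpos)).comp 0 hpoly
    simpa [Function.comp_def] using this
  have hsq : Real.sqrt (SX + (2 * x a * 0 + 0 ^ 2)) = normX p q x := by
    simp [normX, ← hSX]
  have hv : HasDerivAt (fun s => v s (normY p q x)) (v₁ (normX p q x) (normY p q x))
      (Real.sqrt (SX + (2 * x a * 0 + 0 ^ 2))) := by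
    rw [hsq]; exact hv₁ _ _ hrX hrY
  have h2' := hv.comp 0 hsqrt0
  have heq : (fun t : ℝ => v (Real.sqrt (SX + (2 * x a * t + t ^ 2))) (normY p q x))
      = fun t : ℝ => V (x + t • eb a) := by
    funext t
    rw [hinv (x + t • eb a), hnormX t, hnormY t]
  simp only [Function.comp_def] at h2'
  rw [heq] at h2'
  have := h1.unique h2'
  have hrXeq : Real.sqrt SX = normX p q x := by rw [normX, ← hSX]
  rw [this, hrXeq]
  field_simp

lemma deriv_nat {p q : ℕ} {V : E (p + q) → ℝ} (hV : ContDiff ℝ 1 V)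
    {v v₂ : ℝ → ℝ → ℝ}
    (hinv : ∀ x : E (p + q), V x = v (normX p q x) (normY p q x))
    (hv₂ : ∀ r₁ r₂ : ℝ, 0 < r₁ → 0 < r₂ → HasDerivAt (fun s => v r₁ s) (v₂ r₁ r₂) r₂)
    (x : E (p + q)) (hX : normX p q x ≠ 0) (hY : normY p q x ≠ 0) (j : Fin q) :
    fderiv ℝ V x (eb (Fin.natAdd p j))
      = v₂ (normX p q x) (normY p q x) * x (Fin.natAdd p j) / normY p q x := by
  set a := Fin.natAdd p j with ha
  set SY := ∑ j' : Fin q, (x (Fin.natAdd p j')) ^ 2 with hSY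
  have hSYnn : 0 ≤ SY := Finset.sum_nonneg fun _ _ => sq_nonneg _
  have hrX : 0 < normX p q x :=
    lt_of_le_of_ne (Real.sqrt_nonneg _) (Ne.symm hX)
  have hrY : 0 < normY p q x :=
    lt_of_le_of_ne (Real.sqrt_nonneg _) (Ne.symm hY)
  have hSYpos : 0 < SY := by
    by_contra h
    push_neg at h
    have : SY = 0 := le_antisymm h hSYnn
    exact hY (by rw [normY, ← hSY, this, Real.sqrt_zero])
  have natAdd_inj : ∀ {j₁ j₂ : Fin q}, Fin.natAdd p j₁ = Fin.natAdd p j₂ ↔ j₁ = j₂ := by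
    intro j₁ j₂
    constructor
    · intro h; ext; have := congrArg (fun a : Fin (p+q) => (a:ℕ)) h; simpa using this
    · rintro rfl; rfl
  have coordY : ∀ (t : ℝ) (j' : Fin q),
      (x + t • eb a) (Fin.natAdd p j') = x (Fin.natAdd p j') + t * (if j' = j then 1 else 0) := by
    intro t j'
    simp [eb, ha, EuclideanSpace.single_apply, natAdd_inj]
  have coordX : ∀ (t : ℝ) (i : Fin p),
      (x + t • eb a) (Fin.castAdd q i) = x (Fin.castAdd q i) := by
    intro t i
    simp [eb, ha, EuclideanSpace.single_apply, castAdd_ne_natAdd i j]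
  have hnormX : ∀ t : ℝ, normX p q (x + t • eb a) = normX p q x := by
    intro t
    unfold normX
    congr 1
    exact Finset.sum_congr rfl fun i _ => by rw [coordX]
  have hnormY : ∀ t : ℝ, normY p q (x + t • eb a)
      = Real.sqrt (SY + (2 * x a * t + t ^ 2)) := by
    intro t
    unfold normY
    congr 1
    have : ∀ j' : Fin q, (x (Fin.natAdd p j') + t * (if j' = j then 1 else 0)) ^ 2
        = x (Fin.natAdd p j') ^ 2 + (if j' = j then 2 * x (Fin.natAdd p j') * t + t ^ 2 else 0) := by
      intro j'
      split_ifs with h <;> ring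
    calc ∑ j' : Fin q, ((x + t • eb a) (Fin.natAdd p j')) ^ 2
        = ∑ j' : Fin q, (x (Fin.natAdd p j') ^ 2
            + (if j' = j then 2 * x (Fin.natAdd p j') * t + t ^ 2 else 0)) := by
          refine Finset.sum_congr rfl fun j' _ => ?_
          rw [coordY, this]
      _ = SY + (2 * x a * t + t ^ 2) := by
          rw [Finset.sum_add_distrib, Finset.sum_ite_eq' Finset.univ j
            (fun j' => 2 * x (Fin.natAdd p j') * t + t ^ 2)]
          simp [ha]
          exact hSY.symm
  have hφ : HasDerivAt (fun t : ℝ => x + t • eb a) (eb a) 0 := by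
    simpa using ((hasDerivAt_id (0:ℝ)).smul_const (eb a)).const_add x
  have hd' : HasFDerivAt V (fderiv ℝ V x) ((fun t : ℝ => x + t • eb a) 0) := by
    simpa using (hV.differentiable one_ne_zero x).hasFDerivAt
  have h1 : HasDerivAt (fun t : ℝ => V (x + t • eb a)) (fderiv ℝ V x (eb a)) 0 :=
    hd'.comp_hasDerivAt 0 hφ
  have hpoly : HasDerivAt (fun t : ℝ => SY + (2 * x a * t + t ^ 2)) (2 * x a) 0 := by
    have h₁ : HasDerivAt (fun t : ℝ => t) 1 0 := hasDerivAt_id 0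
    have h₂ := (h₁.const_mul (2 * x a)).add (hasDerivAt_pow 2 0)
    have h₃ := h₂.const_add SY
    simpa using h₃
  have hsqrt0 : HasDerivAt (fun t : ℝ => Real.sqrt (SY + (2 * x a * t + t ^ 2)))
      (1 / (2 * Real.sqrt SY) * (2 * x a)) 0 := by
    have := (Real.hasDerivAt_sqrt (by simpa using ne_of_gt hSYpos)).comp 0 hpoly
    simpa [Function.comp_def] using this
  have hsq : Real.sqrt (SY + (2 * x a * 0 + 0 ^ 2)) = normY p q x := by
    simp [normY, ← hSY]
  have hv : HasDerivAt (fun s => v (normX p q x) s) (v₂ (normX p q x) (normY p q x))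
      (Real.sqrt (SY + (2 * x a * 0 + 0 ^ 2))) := by
    rw [hsq]; exact hv₂ _ _ hrX hrY
  have h2' := hv.comp 0 hsqrt0
  simp only [Function.comp_def] at h2'
  have heq : (fun t : ℝ => v (normX p q x) (Real.sqrt (SY + (2 * x a * t + t ^ 2))))
      = fun t : ℝ => V (x + t • eb a) := by
    funext t
    rw [hinv (x + t • eb a), hnormX t, hnormY t]
  rw [heq] at h2'
  have := h1.unique h2'
  have hrYeq : Real.sqrt SY = normY p q x := by rw [normY, ← hSY]
  rw [this, hrYeq]
  field_simp


lemma coord_abs_le (n : ℕ) (x : E n) (a : Fin n) : |x a| ≤ ‖x‖ := by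
  have h0 := EuclideanSpace.norm_eq x
  rw [← Real.sqrt_sq_eq_abs, h0]
  apply Real.sqrt_le_sqrt
  have := Finset.single_le_sum (f := fun j => ‖x j‖ ^ 2) (fun j _ => sq_nonneg _)
    (Finset.mem_univ a)
  simpa [Real.norm_eq_abs, sq_abs] using this

lemma eval_bound {n : ℕ} {V : E n → ℝ} {C : ℝ}
    (hdecay : ∀ x : E n, ‖fderiv ℝ V x‖ ≤ C * (1 + ‖x‖) ^ ((1 : ℝ) - (n : ℝ)))
    (x : E n) (k : Fin n) :
    |fderiv ℝ V x (eb k)| ≤ C * (1 + ‖x‖) ^ ((1 : ℝ) - (n : ℝ)) := by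
  have h1 : |fderiv ℝ V x (eb k)| ≤ ‖fderiv ℝ V x‖ := by
    have := (fderiv ℝ V x).le_opNorm (eb k)
    simpa [eb, EuclideanSpace.norm_single, Real.norm_eq_abs] using this
  exact h1.trans (hdecay x)


lemma integ {p q : ℕ} (hn : 5 ≤ p + q) {V : E (p+q) → ℝ} (hV : ContDiff ℝ 1 V) {C : ℝ}
    (hdecay : ∀ x : E (p+q), ‖fderiv ℝ V x‖ ≤ C * (1 + ‖x‖) ^ ((1:ℝ) - ((p+q : ℕ) : ℝ)))
    (α β i j : Fin (p+q)) :
    Integrable (fun x : E (p+q) =>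
      x α * x β * fderiv ℝ V x (eb i) * fderiv ℝ V x (eb j)) := by
  have hC : 0 ≤ C := by
    have := (norm_nonneg (fderiv ℝ V 0)).trans (hdecay 0)
    simpa [Real.one_rpow] using this
  have hcf : Continuous fun x : E (p+q) => fderiv ℝ V x := hV.continuous_fderiv one_ne_zero
  have happ : ∀ k : Fin (p+q), Continuous fun x : E (p+q) => fderiv ℝ V x (eb k) := fun k =>
    (ContinuousLinearMap.apply ℝ ℝ (eb k)).continuous.comp hcf
  have hcont : Continuous fun x : E (p+q) =>
      x α * x β * fderiv ℝ V x (eb i) * fderiv ℝ V x (eb j) := by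
    exact ((((EuclideanSpace.proj α).continuous.mul
      (EuclideanSpace.proj β).continuous).mul (happ i)).mul (happ j))
  have hlt : ((Module.finrank ℝ (E (p+q)) : ℝ)) < 2 * ((p+q:ℕ) : ℝ) - 4 := by
    rw [finrank_euclideanSpace_fin]
    have : (5 : ℝ) ≤ ((p+q:ℕ) : ℝ) := by exact_mod_cast hn
    linarith
  have hg : Integrable (fun x : E (p+q) => C * C * (1 + ‖x‖) ^ (-(2 * ((p+q:ℕ):ℝ) - 4))) :=
    (integrable_one_add_norm hlt).const_mul _
  refine hg.mono' hcont.aestronglyMeasurable (Filter.Eventually.of_forall fun x => ?_)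
  have ht : (0 : ℝ) < 1 + ‖x‖ := by positivity
  have h2 : ∀ a : Fin (p+q), |x a| ≤ 1 + ‖x‖ := fun a =>
    (coord_abs_le (p+q) x a).trans (by linarith)
  have hD : ∀ k : Fin (p+q), |fderiv ℝ V x (eb k)| ≤ C * (1 + ‖x‖) ^ ((1:ℝ) - ((p+q:ℕ):ℝ)) :=
    eval_bound hdecay x
  have e1 : (1 + ‖x‖) * (1 + ‖x‖) = (1 + ‖x‖) ^ ((2:ℝ)) := by
    rw [show (2:ℝ) = ((2:ℕ):ℝ) by norm_num, Real.rpow_natCast]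
    ring
  have hexp : (1 + ‖x‖) * (1 + ‖x‖) *
        ((1 + ‖x‖) ^ ((1:ℝ) - ((p+q:ℕ) : ℝ)) * (1 + ‖x‖) ^ ((1:ℝ) - ((p+q:ℕ) : ℝ)))
      = (1 + ‖x‖) ^ (-(2 * ((p+q:ℕ):ℝ) - 4)) := by
    rw [e1, ← Real.rpow_add ht, ← Real.rpow_add ht]
    congr 1
    ring
  have habs : ‖x α * x β * fderiv ℝ V x (eb i) * fderiv ℝ V x (eb j)‖
      = |x α| * |x β| * |fderiv ℝ V x (eb i)| * |fderiv ℝ V x (eb j)| := by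
    rw [Real.norm_eq_abs, abs_mul, abs_mul, abs_mul]
  rw [habs]
  calc |x α| * |x β| * |fderiv ℝ V x (eb i)| * |fderiv ℝ V x (eb j)|
      ≤ (1 + ‖x‖) * (1 + ‖x‖) * (C * (1 + ‖x‖) ^ ((1:ℝ) - ((p+q:ℕ) : ℝ)))
        * (C * (1 + ‖x‖) ^ ((1:ℝ) - ((p+q:ℕ) : ℝ))) := by
        gcongr ?_ * ?_ * ?_ * ?_ <;>
          first
            | exact h2 α
            | exact h2 β
            | exact hD i
            | exact hD j
    _ = C * C * ((1 + ‖x‖) * (1 + ‖x‖) *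
          ((1 + ‖x‖) ^ ((1:ℝ) - ((p+q:ℕ) : ℝ)) * (1 + ‖x‖) ^ ((1:ℝ) - ((p+q:ℕ) : ℝ)))) := by ring
    _ = C * C * (1 + ‖x‖) ^ (-(2 * ((p+q:ℕ):ℝ) - 4)) := by rw [hexp]


lemma null_coord {n : ℕ} (a : Fin n) : volume {x : E n | x a = 0} = 0 := by
  have hker : {x : E n | x a = 0}
      = (LinearMap.ker ((EuclideanSpace.proj a : E n →L[ℝ] ℝ) : E n →ₗ[ℝ] ℝ) : Set (E n)) := by
    ext x
    simp [LinearMap.mem_ker]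
  rw [hker]
  apply Measure.addHaar_submodule
  intro h
  have hmem : eb a ∈ LinearMap.ker ((EuclideanSpace.proj a : E n →L[ℝ] ℝ) : E n →ₗ[ℝ] ℝ) := by
    rw [h]; trivial
  have : eb a a = 0 := hmem
  simp [eb, EuclideanSpace.single_apply] at this

lemma ae_norms (p q : ℕ) (hp : 1 ≤ p) (hq : 1 ≤ q) :
    ∀ᵐ x : E (p + q), normX p q x ≠ 0 ∧ normY p q x ≠ 0 := by
  have hp0 : (⟨0, by omega⟩ : Fin p) = ⟨0, by omega⟩ := rfl
  set a : Fin (p+q) := Fin.castAdd q ⟨0, by omega⟩ with haa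
  set b : Fin (p+q) := Fin.natAdd p ⟨0, by omega⟩ with hbb
  have hX : {x : E (p+q) | normX p q x = 0} ⊆ {x : E (p+q) | x a = 0} := by
    intro x hx
    simp only [Set.mem_setOf_eq] at hx ⊢
    have hnn : 0 ≤ ∑ i : Fin p, (x (Fin.castAdd q i)) ^ 2 :=
      Finset.sum_nonneg fun _ _ => sq_nonneg _
    have hsum : ∑ i : Fin p, (x (Fin.castAdd q i)) ^ 2 = 0 :=
      (Real.sqrt_eq_zero hnn).1 hx
    have := (Finset.sum_eq_zero_iff_of_nonneg (fun i _ => sq_nonneg (x (Fin.castAdd q i)))).1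
      hsum ⟨0, by omega⟩ (Finset.mem_univ _)
    exact pow_eq_zero_iff (n := 2) (by norm_num) |>.1 this
  have hY : {x : E (p+q) | normY p q x = 0} ⊆ {x : E (p+q) | x b = 0} := by
    intro x hx
    simp only [Set.mem_setOf_eq] at hx ⊢
    have hnn : 0 ≤ ∑ j : Fin q, (x (Fin.natAdd p j)) ^ 2 :=
      Finset.sum_nonneg fun _ _ => sq_nonneg _
    have hsum : ∑ j : Fin q, (x (Fin.natAdd p j)) ^ 2 = 0 :=
      (Real.sqrt_eq_zero hnn).1 hx
    have := (Finset.sum_eq_zero_iff_of_nonneg (fun j _ => sq_nonneg (x (Fin.natAdd p j)))).1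
      hsum ⟨0, by omega⟩ (Finset.mem_univ _)
    exact pow_eq_zero_iff (n := 2) (by norm_num) |>.1 this
  have h1 : ∀ᵐ x : E (p+q), normX p q x ≠ 0 := by
    rw [ae_iff]
    simpa using measure_mono_null hX (null_coord a)
  have h2 : ∀ᵐ x : E (p+q), normY p q x ≠ 0 := by
    rw [ae_iff]
    simpa using measure_mono_null hY (null_coord b)
  exact h1.and h2


/-- for an `O(p)×O(q)`-invariant `V ∈ C¹ ∩ D^{1,2}` with
`|∇V| ≤ C(1+|x|)^{1-n}`, the Weyl-bubble pairing of `S^p × S^q` equals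
`-C₃ ∫ (|X|∂₂v - |Y|∂₁v)² ≤ 0`. -/
theorem prod_sphere_weyl_pairing (p q : ℕ) (hp : 2 ≤ p) (hq : 2 ≤ q) (hn : 5 ≤ p + q)
    (V : E (p + q) → ℝ) (hV : ContDiff ℝ 1 V) (hD : MemD12 V) (C : ℝ)
    (hdecay : ∀ x : E (p + q), ‖fderiv ℝ V x‖ ≤ C * (1 + ‖x‖) ^ ((1 : ℝ) - ((p + q : ℕ) : ℝ)))
    (v v₁ v₂ : ℝ → ℝ → ℝ)
    (hinv : ∀ x : E (p + q), V x = v (normX p q x) (normY p q x))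
    (hv₁ : ∀ r₁ r₂ : ℝ, 0 < r₁ → 0 < r₂ → HasDerivAt (fun s => v s r₂) (v₁ r₁ r₂) r₁)
    (hv₂ : ∀ r₁ r₂ : ℝ, 0 < r₁ → 0 < r₂ → HasDerivAt (fun s => v r₁ s) (v₂ r₁ r₂) r₂) :
    (∑ i, ∑ α, ∑ j, ∑ β, Wprod p q i α j β *
        ∫ x : E (p + q), x α * x β * fderiv ℝ V x (eb i) * fderiv ℝ V x (eb j))
      = -C3c p q * ∫ x : E (p + q),
          (normX p q x * v₂ (normX p q x) (normY p q x)
            - normY p q x * v₁ (normX p q x) (normY p q x)) ^ 2 ∧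
    (∑ i, ∑ α, ∑ j, ∑ β, Wprod p q i α j β *
        ∫ x : E (p + q), x α * x β * fderiv ℝ V x (eb i) * fderiv ℝ V x (eb j)) ≤ 0 := by
  
  have hp1 : (1:ℕ) ≤ p := by omega
  have hq1 : (1:ℕ) ≤ q := by omega
  -- integrability of each term
  have II : ∀ i α j β : Fin (p+q), Integrable (fun x : E (p+q) =>
      Wprod p q i α j β * (x α * x β * fderiv ℝ V x (eb i) * fderiv ℝ V x (eb j))) := by
    intro i α j β
    exact (integ hn hV hdecay α β i j).const_mul _
  have I4 : ∀ i α j : Fin (p+q), Integrable (fun x : E (p+q) =>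
      ∑ β, Wprod p q i α j β * (x α * x β * fderiv ℝ V x (eb i) * fderiv ℝ V x (eb j))) :=
    fun i α j => integrable_finset_sum _ (fun β _ => II i α j β)
  have I3 : ∀ i α : Fin (p+q), Integrable (fun x : E (p+q) =>
      ∑ j, ∑ β, Wprod p q i α j β * (x α * x β * fderiv ℝ V x (eb i) * fderiv ℝ V x (eb j))) :=
    fun i α => integrable_finset_sum _ (fun j _ => I4 i α j)
  have I2 : ∀ i : Fin (p+q), Integrable (fun x : E (p+q) =>
      ∑ α, ∑ j, ∑ β, Wprod p q i α j β * (x α * x β * fderiv ℝ V x (eb i) * fderiv ℝ V x (eb j))) :=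
    fun i => integrable_finset_sum _ (fun α _ => I3 i α)
  have hswap : (∑ i, ∑ α, ∑ j, ∑ β, Wprod p q i α j β *
        ∫ x : E (p + q), x α * x β * fderiv ℝ V x (eb i) * fderiv ℝ V x (eb j))
      = ∫ x : E (p+q), ∑ i, ∑ α, ∑ j, ∑ β, Wprod p q i α j β *
          (x α * x β * fderiv ℝ V x (eb i) * fderiv ℝ V x (eb j)) := by
    rw [integral_finset_sum _ (fun i _ => I2 i)]
    refine Finset.sum_congr rfl fun i _ => ?_
    rw [integral_finset_sum _ (fun α _ => I3 i α)]
    refine Finset.sum_congr rfl fun α _ => ?_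
    rw [integral_finset_sum _ (fun j _ => I4 i α j)]
    refine Finset.sum_congr rfl fun j _ => ?_
    rw [integral_finset_sum _ (fun β _ => II i α j β)]
    refine Finset.sum_congr rfl fun β _ => ?_
    rw [integral_const_mul]
  -- pointwise a.e. identity
  have hae : (fun x : E (p+q) => ∑ i, ∑ α, ∑ j, ∑ β, Wprod p q i α j β *
        (x α * x β * fderiv ℝ V x (eb i) * fderiv ℝ V x (eb j)))
      =ᵐ[volume] (fun x : E (p+q) => -C3c p q *
        (normX p q x * v₂ (normX p q x) (normY p q x)
          - normY p q x * v₁ (normX p q x) (normY p q x)) ^ 2) := by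
    filter_upwards [ae_norms p q hp1 hq1] with x hx
    obtain ⟨hX, hY⟩ := hx
    set rX := normX p q x with hrX'
    set rY := normY p q x with hrY'
    have hrXpos : 0 < rX := lt_of_le_of_ne (Real.sqrt_nonneg _) (Ne.symm hX)
    have hrYpos : 0 < rY := lt_of_le_of_ne (Real.sqrt_nonneg _) (Ne.symm hY)
    have hDX : ∀ i : Fin p, fderiv ℝ V x (eb (Fin.castAdd q i))
        = (v₁ rX rY / rX) * x (Fin.castAdd q i) := by
      intro i
      rw [deriv_cast hV hinv hv₁ x hX hY i]
      ring
    have hDY : ∀ j : Fin q, fderiv ℝ V x (eb (Fin.natAdd p j))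
        = (v₂ rX rY / rY) * x (Fin.natAdd p j) := by
      intro j
      rw [deriv_nat hV hinv hv₂ x hX hY j]
      ring
    have hc := contraction p q (fun a => x a) (fun a => fderiv ℝ V x (eb a))
      (v₁ rX rY / rX) (v₂ rX rY / rY) hDX hDY
    rw [hc]
    have hSX : (∑ i : Fin p, x (Fin.castAdd q i) ^ 2) = rX ^ 2 := by
      rw [hrX', normX]
      exact (Real.sq_sqrt (Finset.sum_nonneg fun _ _ => sq_nonneg _)).symm
    have hSY : (∑ j : Fin q, x (Fin.natAdd p j) ^ 2) = rY ^ 2 := by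
      rw [hrY', normY]
      exact (Real.sq_sqrt (Finset.sum_nonneg fun _ _ => sq_nonneg _)).symm
    rw [hSX, hSY]
    congr 1
    field_simp
    ring
  have hIempos : 0 ≤ ∫ x : E (p+q),
      (normX p q x * v₂ (normX p q x) (normY p q x)
        - normY p q x * v₁ (normX p q x) (normY p q x)) ^ 2 :=
    integral_nonneg fun x => sq_nonneg _
  have hC3 : 0 ≤ C3c p q := by
    have hpR : (2:ℝ) ≤ (p:ℝ) := by exact_mod_cast hp
    have hqR : (2:ℝ) ≤ (q:ℝ) := by exact_mod_cast hq
    have hnR : (5:ℝ) ≤ ((p+q:ℕ):ℝ) := by exact_mod_cast hn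
    apply div_nonneg
    · nlinarith
    · nlinarith
  have hmain : (∑ i, ∑ α, ∑ j, ∑ β, Wprod p q i α j β *
        ∫ x : E (p + q), x α * x β * fderiv ℝ V x (eb i) * fderiv ℝ V x (eb j))
      = -C3c p q * ∫ x : E (p + q),
          (normX p q x * v₂ (normX p q x) (normY p q x)
            - normY p q x * v₁ (normX p q x) (normY p q x)) ^ 2 := by
    rw [hswap, integral_congr_ae hae, integral_const_mul]
  refine ⟨hmain, ?_⟩
  rw [hmain]
  have := mul_nonneg hC3 hIempos
  linarith
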